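/- arXiv:1801.05593 — 2 statements merged into one kernel-verified Lean document; each statement's English description precedes it below -/
import Mathlib

section
/- Let λ be a real number and f : V → ℝ a function with Δf = λ·f that is 1-Lipschitz with respect to the graph distance (|f(x) − f(y)| ≤ d(x,y) for all x, y). Then for every pair of adjacent vertices τ, σ and every α ∈ [0,1], W(m_τ^α, m_σ^α) ≥ (f(τ) − f(σ)) − (1−α)·λ·(f(τ)/d_τ − f(σ)/d_σ). -/
open Finset Filter Topology

noncomputable section

/-- A coupling between two (probability) mass functions `μ` and `ν` on a finite
vertex set: a matrix with values in `[0,1]` whose row sums are `μ` and whose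
column sums are `ν`. -/
def IsCoupling {V : Type*} [Fintype V] (A : V → V → ℝ) (μ ν : V → ℝ) : Prop :=
  (∀ x y, 0 ≤ A x y ∧ A x y ≤ 1) ∧
  (∀ x, ∑ y, A x y = μ x) ∧
  (∀ y, ∑ x, A x y = ν y)

/-- The (1-)Wasserstein distance between two mass functions on the vertex set of a
graph, with respect to the graph distance. -/
def Wass {V : Type*} [Fintype V] (G : SimpleGraph V) (μ ν : V → ℝ) : ℝ :=
  sInf {c | ∃ A : V → V → ℝ, IsCoupling A μ ν ∧
    c = ∑ x, ∑ y, A x y * (G.dist x y : ℝ)}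

/-- The probability measure `m_x^α`: mass `α` at `x`, mass `(1-α)/d_x` at each
neighbor of `x`, and `0` elsewhere. -/
def mMeas {V : Type*} [Fintype V] [DecidableEq V] (G : SimpleGraph V)
    [DecidableRel G.Adj] (α : ℝ) (x : V) : V → ℝ :=
  fun z => if z = x then α else if G.Adj x z then (1 - α) / (G.degree x : ℝ) else 0

/-- The `α`-Ricci curvature `κ_α(x,y) = 1 - W(m_x^α, m_y^α)/d(x,y)`. -/
def kappaAlpha {V : Type*} [Fintype V] [DecidableEq V] (G : SimpleGraph V)
    [DecidableRel G.Adj] (α : ℝ) (x y : V) : ℝ :=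
  1 - Wass G (mMeas G α x) (mMeas G α y) / (G.dist x y : ℝ)

/-- The Lin–Lu–Yau Ricci curvature `κ(x,y) = lim_{α→1⁻} κ_α(x,y)/(1-α)`. -/
def kappa {V : Type*} [Fintype V] [DecidableEq V] (G : SimpleGraph V)
    [DecidableRel G.Adj] (x y : V) : ℝ :=
  limUnder (𝓝[<] (1 : ℝ)) (fun α => kappaAlpha G α x y / (1 - α))

/-- The (non-normalized) graph Laplacian `(Δf)(x) = d_x f(x) - ∑_{y ~ x} f(y)`. -/
def lap {V : Type*} [Fintype V] [DecidableEq V] (G : SimpleGraph V)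
    [DecidableRel G.Adj] (f : V → ℝ) (x : V) : ℝ :=
  (G.degree x : ℝ) * f x - ∑ y ∈ G.neighborFinset x, f y

end

private lemma mMeas_sum_mul {V : Type*} [Fintype V] [DecidableEq V]
    (G : SimpleGraph V) [DecidableRel G.Adj] (α : ℝ) (x : V) (g : V → ℝ) :
    ∑ z, mMeas G α x z * g z
      = α * g x + (1 - α) / (G.degree x : ℝ) * ∑ z ∈ G.neighborFinset x, g z := by
  have h : ∀ z, mMeas G α x z * g z
      = (if z = x then α * g x else 0)
        + (if G.Adj x z then (1 - α) / (G.degree x : ℝ) * g z else 0) := by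
    intro z
    by_cases h1 : z = x
    · subst h1; simp [mMeas, G.irrefl]
    · by_cases h2 : G.Adj x z <;> simp [mMeas, h1, h2]
  rw [Finset.sum_congr rfl fun z _ => h z, Finset.sum_add_distrib]
  congr 1
  · simp
  · rw [SimpleGraph.neighborFinset_eq_filter, Finset.mul_sum, ← Finset.sum_filter]

theorem stmt14 {V : Type*} [Fintype V] [DecidableEq V]
    (G : SimpleGraph V) [DecidableRel G.Adj]
    (hconn : G.Connected) (hcard : 1 < Fintype.card V)
    (lam : ℝ) (f : V → ℝ) (heig : ∀ x, lap G f x = lam * f x)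
    (hlip : ∀ x y : V, |f x - f y| ≤ (G.dist x y : ℝ))
    (τ σ : V) (hadj : G.Adj τ σ)
    (α : ℝ) (hα : α ∈ Set.Icc (0 : ℝ) 1) :
    (f τ - f σ) - (1 - α) * lam * (f τ / (G.degree τ : ℝ) - f σ / (G.degree σ : ℝ)) ≤
      Wass G (mMeas G α τ) (mMeas G α σ) := by
  obtain ⟨hα0, hα1⟩ := hα
  have hdeg : ∀ x : V, 0 < G.degree x := by
    intro x
    rw [SimpleGraph.degree_pos_iff_exists_adj]
    obtain ⟨w, hw⟩ := Fintype.exists_ne_of_one_lt_card hcard x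
    obtain ⟨p⟩ := hconn.preconnected x w
    cases p with
    | nil => exact absurd rfl hw
    | cons h _ => exact ⟨_, h⟩
  have hdeg' : ∀ x : V, (0 : ℝ) < (G.degree x : ℝ) := fun x => by
    exact_mod_cast hdeg x
  -- each mMeas value is in [0,1]
  have hm01 : ∀ x z, 0 ≤ mMeas G α x z ∧ mMeas G α x z ≤ 1 := by
    intro x z
    unfold mMeas
    split_ifs with h1 h2
    · exact ⟨hα0, hα1⟩
    · constructor
      · apply div_nonneg (by linarith) (hdeg' x).le
      · rw [div_le_one (hdeg' x)]
        have : (1 : ℝ) ≤ (G.degree x : ℝ) := by exact_mod_cast hdeg x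
        linarith
    · norm_num
  -- each mMeas has total mass 1
  have hone : ∀ x : V, ∑ z, mMeas G α x z = 1 := by
    intro x
    have h := mMeas_sum_mul G α x (fun _ => (1 : ℝ))
    simp only [mul_one] at h
    rw [h, Finset.sum_const, SimpleGraph.card_neighborFinset_eq_degree, nsmul_eq_mul,
      mul_one, div_mul_cancel₀ _ (hdeg' x).ne']
    ring
  -- expectation of f under mMeas
  have hexp : ∀ x : V, ∑ z, mMeas G α x z * f z
      = f x - (1 - α) * lam * (f x / (G.degree x : ℝ)) := by
    intro x
    have hs : ∑ z ∈ G.neighborFinset x, f z = (G.degree x : ℝ) * f x - lam * f x := by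
      have := heig x
      unfold lap at this
      linarith
    have hd : (G.degree x : ℝ) ≠ 0 := (hdeg' x).ne'
    rw [mMeas_sum_mul, hs]
    field_simp
    ring
  rw [Wass]
  apply le_csInf
  · refine ⟨_, fun x y => mMeas G α τ x * mMeas G α σ y, ⟨?_, ?_, ?_⟩, rfl⟩
    · intro x y
      exact ⟨mul_nonneg (hm01 τ x).1 (hm01 σ y).1,
        mul_le_one₀ (hm01 τ x).2 (hm01 σ y).1 (hm01 σ y).2⟩
    · intro x; rw [← Finset.mul_sum, hone σ, mul_one]
    · intro y; rw [← Finset.sum_mul, hone τ, one_mul]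
  · rintro b ⟨A, ⟨hA01, hrow, hcol⟩, rfl⟩
    have e1 : ∑ x, ∑ y, A x y * f x = ∑ x, mMeas G α τ x * f x := by
      refine Finset.sum_congr rfl fun x _ => ?_
      rw [← Finset.sum_mul, hrow]
    have e2 : ∑ x, ∑ y, A x y * f y = ∑ y, mMeas G α σ y * f y := by
      rw [Finset.sum_comm]
      refine Finset.sum_congr rfl fun y _ => ?_
      rw [← Finset.sum_mul, hcol]
    have e : ∑ x, ∑ y, A x y * (f x - f y)
        = (∑ x, mMeas G α τ x * f x) - (∑ y, mMeas G α σ y * f y) := by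
      simp_rw [mul_sub, Finset.sum_sub_distrib]
      rw [e1, e2]
    have lhs_eq : (f τ - f σ)
        - (1 - α) * lam * (f τ / (G.degree τ : ℝ) - f σ / (G.degree σ : ℝ))
        = ∑ x, ∑ y, A x y * (f x - f y) := by
      rw [e, hexp τ, hexp σ]
      ring
    rw [lhs_eq]
    refine Finset.sum_le_sum fun x _ => Finset.sum_le_sum fun y _ => ?_
    exact mul_le_mul_of_nonneg_left ((le_abs_self _).trans (hlip x y)) (hA01 x y).1
end

section
/- In the graph G_n, every nonzero real eigenvalue λ of the graph Laplacian Δ (i.e. every λ ≠ 0 for which there exists a function f on the vertices of G_n, not identically zero, with Δf = λ·f) satisfies λ ≥ 2/(n+2)². -/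
open Finset Filter Topology

/-- The corresponding graph of the boundary of the `(n+1)`-simplex: vertices are
the nonempty subsets of `{0,…,n+1}` of cardinality at most `n+1`, adjacent when one
is contained in the other with cardinalities differing by exactly `1`. -/
def simplexGraph (n : ℕ) :
    SimpleGraph {s : Finset (Fin (n + 2)) // s.Nonempty ∧ s.card ≤ n + 1} where
  Adj s t := (s.1 ⊆ t.1 ∧ t.1.card = s.1.card + 1) ∨ (t.1 ⊆ s.1 ∧ s.1.card = t.1.card + 1)
  symm := ⟨by intro s t h; tauto⟩
  loopless := ⟨by intro s h; rcases h with ⟨_, h⟩ | ⟨_, h⟩ <;> omega⟩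

instance (n : ℕ) : DecidableRel (simplexGraph n).Adj := fun s t =>
  inferInstanceAs (Decidable
    ((s.1 ⊆ t.1 ∧ t.1.card = s.1.card + 1) ∨ (t.1 ⊆ s.1 ∧ s.1.card = t.1.card + 1)))

/-!
Extended by zero to `∅` and to the full set, an eigenfunction `f` of `G_n` becomes a function on
the hypercube `Finset (Fin (n + 2))`, and `G_n` is the subgraph induced on the other vertices.
As `λ ≠ 0`, `∑ f = 0`, so the Poincaré inequality of the hypercube (its spectral gap is `2`,
proved by tensorisation over the coordinates) bounds `4 ∑ f²` by the hypercube Dirichlet energy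
of the extension. That energy exceeds the Dirichlet energy `2 λ ∑ f²` of `f` in `G_n` by at most
`2 ∑ f²`, because for `n ≥ 1` no vertex of `G_n` is adjacent to both `∅` and the full set.
Hence `λ ≥ 1 ≥ 2 / (n + 2)²`.
-/

open Matrix
open scoped symmDiff

section Laplacian

variable {V : Type*} [Fintype V] [DecidableEq V] (G : SimpleGraph V) [DecidableRel G.Adj]

def dirichletEnergy (f : V → ℝ) : ℝ :=
  ∑ x, ∑ y, if G.Adj x y then (f x - f y) ^ 2 else 0

lemma lap_eq_lapMatrix_mulVec (f : V → ℝ) : lap G f = G.lapMatrix ℝ *ᵥ f := by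
  ext x
  rw [SimpleGraph.lapMatrix_mulVec_apply, lap]

lemma sum_lap_eq_zero (f : V → ℝ) : ∑ x, lap G f x = 0 := by
  rw [← one_dotProduct, lap_eq_lapMatrix_mulVec, dotProduct_mulVec, ← mulVec_transpose,
    (G.isSymm_lapMatrix ℝ).eq]
  exact (congrArg (· ⬝ᵥ f) G.lapMatrix_mulVec_const_eq_zero).trans (zero_dotProduct f)

lemma dirichletEnergy_eq_two_mul_sum_mul_lap (f : V → ℝ) :
    dirichletEnergy G f = 2 * ∑ x, f x * lap G f x := by
  have h := G.lapMatrix_toLinearMap₂' ℝ f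
  rw [toLinearMap₂'_apply', ← lap_eq_lapMatrix_mulVec] at h
  rw [dirichletEnergy, ← dotProduct, h]
  ring

variable {G} {f : V → ℝ} {lam : ℝ}

lemma sum_eq_zero_of_lap_eq_smul (hlam : lam ≠ 0) (heig : ∀ x, lap G f x = lam * f x) :
    ∑ x, f x = 0 := by
  have h := sum_lap_eq_zero G f
  simp only [heig, ← mul_sum] at h
  exact (mul_eq_zero.mp h).resolve_left hlam

lemma dirichletEnergy_eq_of_lap_eq_smul (heig : ∀ x, lap G f x = lam * f x) :
    dirichletEnergy G f = 2 * lam * ∑ x, f x ^ 2 := by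
  simp only [dirichletEnergy_eq_two_mul_sum_mul_lap, heig, mul_sum]
  exact congrArg _ (funext fun x => by ring)

end Laplacian

section Hypercube

variable {α : Type*} [DecidableEq α]

lemma card_symmDiff_eq_one_iff {s t : Finset α} :
    #(s ∆ t) = 1 ↔ (s ⊆ t ∧ #t = #s + 1) ∨ (t ⊆ s ∧ #s = #t + 1) := by
  have hcard : #(s ∆ t) = #(s \ t) + #(t \ s) := card_union_of_disjoint disjoint_sdiff_sdiff
  have hs := card_sdiff_add_card_inter s t
  have ht := card_sdiff_add_card_inter t s
  rw [inter_comm] at ht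
  rw [hcard, ← sdiff_eq_empty_iff_subset, ← sdiff_eq_empty_iff_subset, ← card_eq_zero,
    ← card_eq_zero]
  omega

variable (α) in
def hypercube : SimpleGraph (Finset α) where
  Adj s t := #(s ∆ t) = 1
  symm := ⟨fun s t h => by rwa [symmDiff_comm]⟩
  loopless := ⟨fun s h => by simp at h⟩

instance : DecidableRel (hypercube α).Adj := fun s t =>
  inferInstanceAs (Decidable (#(s ∆ t) = 1))

lemma hypercube_adj_iff_exists {s t : Finset α} :
    (hypercube α).Adj s t ↔ ∃ i, s ∆ {i} = t := by
  change #(s ∆ t) = 1 ↔ _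
  rw [card_eq_one]
  refine exists_congr fun i => ?_
  rw [← symmDiff_right_inj (a := s), symmDiff_symmDiff_cancel_left, eq_comm]

lemma hypercube_adj_empty_iff {s : Finset α} :
    (hypercube α).Adj s ∅ ↔ #s = 1 := by
  change #(s ∆ ⊥) = 1 ↔ _
  rw [symmDiff_bot]

lemma hypercube_adj_univ_iff [Fintype α] {s : Finset α} :
    (hypercube α).Adj s univ ↔ #s + 1 = Fintype.card α := by
  have hcompl : s ∆ univ = sᶜ := by
    ext
    simp [mem_symmDiff]
  change #(s ∆ univ) = 1 ↔ _
  rw [hcompl, card_compl]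
  have := card_le_univ s
  omega

lemma sum_ite_hypercube_adj [Fintype α] (s : Finset α) (F : Finset α → ℝ) :
    ∑ t, (if (hypercube α).Adj s t then F t else 0) = ∑ i, F (s ∆ {i}) := by
  have himage : univ.filter ((hypercube α).Adj s) = univ.image (s ∆ {·}) := by
    ext t
    simp [hypercube_adj_iff_exists]
  rw [← sum_filter, himage, sum_image fun i _ j _ h =>
    singleton_injective (symmDiff_right_injective s h)]

lemma dirichletEnergy_hypercube [Fintype α] (g : Finset α → ℝ) :
    dirichletEnergy (hypercube α) g = ∑ s, ∑ i, (g s - g (s ∆ {i})) ^ 2 :=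
  sum_congr rfl fun s _ => sum_ite_hypercube_adj s _

lemma symmDiff_singleton_of_notMem {s : Finset α} {a : α} (h : a ∉ s) :
    s ∆ {a} = insert a s := by
  ext x
  by_cases hx : x = a <;> simp_all [mem_symmDiff]

lemma insert_symmDiff_singleton_self {s : Finset α} {a : α} (h : a ∉ s) :
    insert a s ∆ {a} = s := by
  ext x
  by_cases hx : x = a <;> simp_all [mem_symmDiff]

lemma insert_symmDiff_singleton_of_ne {s : Finset α} {a i : α} (h : i ≠ a) :
    insert a s ∆ {i} = insert a (s ∆ {i}) := by
  ext x
  by_cases hx : x = a <;> simp_all [mem_symmDiff, eq_comm]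

lemma hypercube_poincare_powerset (g : Finset α → ℝ) (S : Finset α) :
    4 * (2 ^ #S * ∑ s ∈ S.powerset, g s ^ 2 - (∑ s ∈ S.powerset, g s) ^ 2) ≤
      2 ^ #S * ∑ i ∈ S, ∑ s ∈ S.powerset, (g s - g (s ∆ {i})) ^ 2 := by
  induction S using Finset.induction_on generalizing g with
  | empty => simp
  | insert a S ha ih =>
    have hmem : ∀ t ∈ S.powerset, a ∉ t := fun t ht hat => ha (mem_powerset.mp ht hat)
    have edges_a : ∑ s ∈ (insert a S).powerset, (g s - g (s ∆ {a})) ^ 2 =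
        2 * ∑ t ∈ S.powerset, (g (insert a t) - g t) ^ 2 := by
      rw [sum_powerset_insert ha, two_mul]
      congr 1 <;> refine sum_congr rfl fun t ht => ?_
      · rw [symmDiff_singleton_of_notMem (hmem t ht)]
        ring
      · rw [insert_symmDiff_singleton_self (hmem t ht)]
    have edges_i : ∀ i ∈ S, ∑ s ∈ (insert a S).powerset, (g s - g (s ∆ {i})) ^ 2 =
        ∑ t ∈ S.powerset, (g t - g (t ∆ {i})) ^ 2 +
          ∑ t ∈ S.powerset, (g (insert a t) - g (insert a (t ∆ {i}))) ^ 2 := by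
      intro i hi
      rw [sum_powerset_insert ha]
      congr 1
      refine sum_congr rfl fun t _ => ?_
      rw [insert_symmDiff_singleton_of_ne (ne_of_mem_of_not_mem hi ha)]
    have cauchy_schwarz := sq_sum_le_card_mul_sum_sq (s := S.powerset)
      (f := fun t => g (insert a t) - g t)
    rw [card_powerset, sum_sub_distrib] at cauchy_schwarz
    have ih₀ := ih g
    have ih₁ := ih fun t => g (insert a t)
    rw [sum_powerset_insert ha, sum_powerset_insert ha, sum_insert ha, edges_a,
      sum_congr rfl edges_i, sum_add_distrib, card_insert_of_notMem ha, pow_succ]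
    push_cast at cauchy_schwarz
    nlinarith

lemma hypercube_poincare [Fintype α] (g : Finset α → ℝ) :
    4 * (2 ^ Fintype.card α * ∑ s, g s ^ 2 - (∑ s, g s) ^ 2) ≤
      2 ^ Fintype.card α * dirichletEnergy (hypercube α) g := by
  have h := hypercube_poincare_powerset g univ
  rwa [powerset_univ, card_univ, sum_comm, ← dirichletEnergy_hypercube] at h

end Hypercube

section ExtendByZero

variable {W : Type*} {p : W → Prop} [DecidablePred p]

def extendByZero (f : {w // p w} → ℝ) (w : W) : ℝ :=
  if h : p w then f ⟨w, h⟩ else 0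

@[simp] lemma extendByZero_val (f : {w // p w} → ℝ) (x : {w // p w}) :
    extendByZero f x = f x :=
  dif_pos x.2

@[simp] lemma extendByZero_val_of_not (f : {w // p w} → ℝ) (y : {w // ¬ p w}) :
    extendByZero f y = 0 :=
  dif_neg y.2

variable [Fintype W]

lemma sum_extendByZero (f : {w // p w} → ℝ) : ∑ w, extendByZero f w = ∑ x, f x := by
  simp [← Fintype.sum_subtype_add_sum_subtype p]

lemma sum_extendByZero_sq (f : {w // p w} → ℝ) :
    ∑ w, extendByZero f w ^ 2 = ∑ x, f x ^ 2 := by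
  simp [← Fintype.sum_subtype_add_sum_subtype p]

variable (H : SimpleGraph W) [DecidableRel H.Adj] (G : SimpleGraph {w // p w}) [DecidableRel G.Adj]

lemma dirichletEnergy_extendByZero (hG : ∀ x y, G.Adj x y ↔ H.Adj x y)
    (f : {w // p w} → ℝ) :
    dirichletEnergy H (extendByZero f) = dirichletEnergy G f +
      2 * ∑ x : {w // p w}, ∑ y : {w // ¬ p w}, if H.Adj x y then f x ^ 2 else 0 := by
  simp only [dirichletEnergy, ← Fintype.sum_subtype_add_sum_subtype p, sum_add_distrib,
    extendByZero_val, extendByZero_val_of_not, hG, sub_zero, zero_sub, neg_sq,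
    zero_pow two_ne_zero, ite_self, sum_const_zero, add_zero]
  have hsymm : (∑ y : {w // ¬ p w}, ∑ x : {w // p w}, if H.Adj y x then f x ^ 2 else 0) =
      ∑ x : {w // p w}, ∑ y : {w // ¬ p w}, if H.Adj x y then f x ^ 2 else 0 := by
    rw [sum_comm]
    simp only [H.adj_comm]
  rw [hsymm]
  ring

lemma dirichletEnergy_extendByZero_le (hG : ∀ x y, G.Adj x y ↔ H.Adj x y)
    (hout : ∀ (x : {w // p w}) (y z : {w // ¬ p w}), H.Adj x y → H.Adj x z → y = z)
    (f : {w // p w} → ℝ) :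
    dirichletEnergy H (extendByZero f) ≤ dirichletEnergy G f + 2 * ∑ x, f x ^ 2 := by
  rw [dirichletEnergy_extendByZero H G hG]
  gcongr with x
  rw [← sum_filter, sum_const, nsmul_eq_mul]
  have hcard : #(univ.filter fun y : {w // ¬ p w} => H.Adj x y) ≤ 1 :=
    card_le_one.mpr fun y hy z hz => hout x y z (mem_filter.1 hy).2 (mem_filter.1 hz).2
  calc _ ≤ (1 : ℝ) * f x ^ 2 := by gcongr; exact_mod_cast hcard
    _ = f x ^ 2 := one_mul _

end ExtendByZero

section SimplexGraph

variable {n : ℕ}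

lemma simplexGraph_adj_iff (s t : {s : Finset (Fin (n + 2)) // s.Nonempty ∧ #s ≤ n + 1}) :
    (simplexGraph n).Adj s t ↔ (hypercube (Fin (n + 2))).Adj s t :=
  card_symmDiff_eq_one_iff.symm

lemma eq_empty_or_eq_univ_of_not_vertex {s : Finset (Fin (n + 2))}
    (hs : ¬ (s.Nonempty ∧ #s ≤ n + 1)) : s = ∅ ∨ s = univ := by
  rcases not_and_or.mp hs with hs | hs
  · exact .inl (not_nonempty_iff_eq_empty.mp hs)
  · refine .inr (eq_univ_of_card s ?_)
    have := card_le_univ s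
    rw [Fintype.card_fin] at this ⊢
    omega

lemma eq_and_card_of_hypercube_adj_not_vertex {x u : Finset (Fin (n + 2))}
    (hu : ¬ (u.Nonempty ∧ #u ≤ n + 1)) (hadj : (hypercube (Fin (n + 2))).Adj x u) :
    (u = ∅ ∧ #x = 1) ∨ (u = univ ∧ #x = n + 1) := by
  rcases eq_empty_or_eq_univ_of_not_vertex hu with rfl | rfl
  · exact .inl ⟨rfl, hypercube_adj_empty_iff.mp hadj⟩
  · refine .inr ⟨rfl, ?_⟩
    have := hypercube_adj_univ_iff.mp hadj
    rw [Fintype.card_fin] at this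
    omega

lemma simplexGraph_outer_neighbor_unique (hn : 1 ≤ n)
    (x : {s : Finset (Fin (n + 2)) // s.Nonempty ∧ #s ≤ n + 1})
    (y z : {s : Finset (Fin (n + 2)) // ¬ (s.Nonempty ∧ #s ≤ n + 1)})
    (hy : (hypercube (Fin (n + 2))).Adj x y) (hz : (hypercube (Fin (n + 2))).Adj x z) :
    y = z := by
  apply Subtype.ext
  rcases eq_and_card_of_hypercube_adj_not_vertex y.2 hy with ⟨hy, hy'⟩ | ⟨hy, hy'⟩ <;>
    rcases eq_and_card_of_hypercube_adj_not_vertex z.2 hz with ⟨hz, hz'⟩ | ⟨hz, hz'⟩ <;>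
    first | omega | rw [hy, hz]

end SimplexGraph

theorem one_le_of_lap_simplexGraph_eq_smul {n : ℕ} (hn : 1 ≤ n) {lam : ℝ} (hlam : lam ≠ 0)
    {f : {s : Finset (Fin (n + 2)) // s.Nonempty ∧ #s ≤ n + 1} → ℝ} (hf : f ≠ 0)
    (heig : ∀ x, lap (simplexGraph n) f x = lam * f x) :
    1 ≤ lam := by
  have hnorm : 0 < ∑ x, f x ^ 2 := by
    obtain ⟨x, hx⟩ := Function.ne_iff.mp hf
    exact sum_pos' (fun _ _ => sq_nonneg _) ⟨x, mem_univ x, pow_two_pos_of_ne_zero hx⟩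
  have hpoincare := hypercube_poincare (extendByZero f)
  rw [sum_extendByZero, sum_extendByZero_sq, sum_eq_zero_of_lap_eq_smul hlam heig,
    Fintype.card_fin] at hpoincare
  have hextend := dirichletEnergy_extendByZero_le _ _ simplexGraph_adj_iff
    (simplexGraph_outer_neighbor_unique hn) f
  rw [dirichletEnergy_eq_of_lap_eq_smul heig] at hextend
  have hcube : 4 * ∑ x, f x ^ 2 ≤ dirichletEnergy (hypercube (Fin (n + 2))) (extendByZero f) :=
    le_of_mul_le_mul_left (by linarith) (by positivity : (0 : ℝ) < 2 ^ (n + 2))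
  have hlam_norm : 1 * ∑ x, f x ^ 2 ≤ lam * ∑ x, f x ^ 2 := by linarith
  exact le_of_mul_le_mul_right hlam_norm hnorm

theorem stmt17 (n : ℕ) (hn : 2 ≤ n) (lam : ℝ) (hlam : lam ≠ 0)
    (f : {s : Finset (Fin (n + 2)) // s.Nonempty ∧ s.card ≤ n + 1} → ℝ) (hf : f ≠ 0)
    (heig : ∀ x, lap (simplexGraph n) f x = lam * f x) :
    2 / ((n : ℝ) + 2) ^ 2 ≤ lam := by
  refine le_trans ?_ (one_le_of_lap_simplexGraph_eq_smul (by omega) hlam hf heig)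
  rw [div_le_one (by positivity)]
  nlinarith [n.cast_nonneg (α := ℝ)]
end
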